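/- arXiv:1502.05330 — 4 statements merged into one kernel-verified Lean document; each statement's English description precedes it below -/
import Mathlib

section
/- Let |ψ⟩ be a normalized state of the N-spin system satisfying the local-reversibility bound with function f. Let L be a subset of the spins and P_L a projector supported on L with α := ‖P_L|ψ⟩‖ > 0 and β := ‖(I − P_L)|ψ⟩‖ > 0, and set |ψ_a⟩ := P_L|ψ⟩/α and |ψ_b⟩ := (I − P_L)|ψ⟩/β. Then for every positive integer q there exists a q-local operator O such that ‖O|ψ_a⟩ − |ψ_b⟩‖ ≤ f(q/√|L|) / (α² β). -/
noncomputable section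

open scoped ComplexConjugate

/-- The Hilbert space of `N` spins, each of local dimension `d`:
the `N`-fold tensor product `⊗ ℂ^d`, realized as the space with orthonormal
basis indexed by configurations `Fin N → Fin d`. -/
abbrev SpinSpace (N d : ℕ) : Type := EuclideanSpace ℂ (Fin N → Fin d)

/-- Operators on the spin system. -/
abbrev SpinOp (N d : ℕ) : Type := SpinSpace N d →L[ℂ] SpinSpace N d

variable {N d : ℕ}

/-- The standard (computational) basis vector labelled by a configuration. -/
def basisVec (f : Fin N → Fin d) : SpinSpace N d := EuclideanSpace.single f 1

/-- The matrix entry `⟨f| A |g⟩` of an operator in the computational basis. -/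
def matEntry (A : SpinOp N d) (f g : Fin N → Fin d) : ℂ :=
  inner ℂ (basisVec f) (A (basisVec g))

/-- `A` is supported on the subset `X` of spins: under the tensor factorization
`ℋ ≅ ℋ_X ⊗ ℋ_{Xᶜ}` it has the form `o ⊗ I`.  Concretely: matrix entries vanish
unless the two configurations agree outside `X`, and entries depend only on the
restrictions of the configurations to `X`. -/
def SupportedOn (X : Finset (Fin N)) (A : SpinOp N d) : Prop :=
  (∀ f g : Fin N → Fin d, (∃ i, i ∉ X ∧ f i ≠ g i) → matEntry A f g = 0) ∧
  (∀ f g f' g' : Fin N → Fin d,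
      (∀ i ∈ X, f i = f' i) → (∀ i ∈ X, g i = g' i) →
      (∀ i, i ∉ X → f i = g i) → (∀ i, i ∉ X → f' i = g' i) →
      matEntry A f g = matEntry A f' g')

/-- A `q`-local operator: a sum of operators, each supported on at most `q` spins. -/
def IsLocalOp (q : ℕ) (A : SpinOp N d) : Prop :=
  ∃ (n : ℕ) (X : Fin n → Finset (Fin N)) (o : Fin n → SpinOp N d),
    (∀ t, (X t).card ≤ q ∧ SupportedOn (X t) (o t)) ∧ A = ∑ t, o t

/-- A `k`-local Hamiltonian with interaction strength `g`: a sum of Hermitian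
terms, each supported on at most `k` spins, such that for every spin the total
norm of the terms acting on it is at most `g`. -/
def IsKLocalHamiltonian (k : ℕ) (g : ℝ) (H : SpinOp N d) : Prop :=
  ∃ (n : ℕ) (X : Fin n → Finset (Fin N)) (h : Fin n → SpinOp N d),
    (∀ t, (X t).card ≤ k ∧ SupportedOn (X t) (h t) ∧ IsSelfAdjoint (h t)) ∧
    (∀ i : Fin N, ∑ t ∈ Finset.univ.filter (fun t => i ∈ X t), ‖h t‖ ≤ g) ∧
    H = ∑ t, h t

/-- An additive operator `A = ∑_{i ∈ L} a_i`, each `a_i` Hermitian, supported on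
the single spin `i`, with `‖a_i‖ ≤ 1`. -/
def IsAdditiveOn (L : Finset (Fin N)) (a : Fin N → SpinOp N d) (A : SpinOp N d) : Prop :=
  (∀ i ∈ L, SupportedOn {i} (a i) ∧ IsSelfAdjoint (a i) ∧ ‖a i‖ ≤ 1) ∧
  A = ∑ i ∈ L, a i

/-- The span of all eigenvectors of `A` whose (real) eigenvalue satisfies `P`. -/
def eigSpan (A : SpinOp N d) (P : ℝ → Prop) : Submodule ℂ (SpinSpace N d) :=
  ⨆ (a : ℝ) (_ : P a), Module.End.eigenspace (A : SpinSpace N d →ₗ[ℂ] SpinSpace N d) (a : ℂ)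

/-- Spectral projector of `A` onto the eigenvalues satisfying `P` (the orthogonal
projection onto the span of the corresponding eigenvectors). -/
def specProj (A : SpinOp N d) (P : ℝ → Prop) : SpinOp N d :=
  (eigSpan A P).subtypeL.comp (eigSpan A P).orthogonalProjectionOnto

/-- `m` is a median of `A` in the state `ψ`. -/
def IsMedian (A : SpinOp N d) (ψ : SpinSpace N d) (m : ℝ) : Prop :=
  (1:ℝ)/2 ≤ (inner ℂ ψ ((specProj A (fun a => a ≤ m)) ψ) : ℂ).re ∧
  (1:ℝ)/2 ≤ (inner ℂ ψ ((specProj A (fun a => m ≤ a)) ψ) : ℂ).re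

/-- The state `ψ` satisfies the local-reversibility bound with function `f`. -/
def SatisfiesLR (f : ℝ → ℝ) (ψ : SpinSpace N d) : Prop :=
  ∀ (L : Finset (Fin N)) (Γ : SpinOp N d), SupportedOn L Γ →
    (inner ℂ ψ (Γ ψ) : ℂ) ≠ 0 →
    ∀ q : ℕ, 0 < q →
      ∃ R : SpinOp N d, IsLocalOp q R ∧
        ‖R (Γ ψ) - ψ‖ ≤ ‖Γ‖ / ‖(inner ℂ ψ (Γ ψ) : ℂ)‖ * f ((q : ℝ) / Real.sqrt (L.card))

/-- `H` has ground energy `0` with unique normalized ground state `Ω` and spectral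
gap (at least) `δE`: `Ω` is a null state, every null state is proportional to `Ω`,
and on the orthogonal complement of `Ω` the energy is at least `δE`. -/
def IsGappedGround (H : SpinOp N d) (Ω : SpinSpace N d) (δE : ℝ) : Prop :=
  ‖Ω‖ = 1 ∧ H Ω = 0 ∧
  (∀ φ : SpinSpace N d, H φ = 0 → ∃ c : ℂ, φ = c • Ω) ∧
  (∀ φ : SpinSpace N d, (inner ℂ Ω φ : ℂ) = 0 → δE * ‖φ‖ ^ 2 ≤ (inner ℂ φ (H φ) : ℂ).re)

/-! With `α = ‖Pψ‖` and `β = ‖ψ - Pψ‖`, local reversibility applied to `Γ = P`, for which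
`‖P‖ = 1` and `⟨ψ|P|ψ⟩ = α²`, gives a `q`-local `R` with `‖R P ψ - ψ‖ ≤ f / α²`.  The operator
`O = (α / β) (R - 1)` then works, because `O ψ_a - ψ_b = (R P ψ - ψ) / β`. -/

theorem IsIdempotentElem.one_le_norm {R : Type*} [NonUnitalNormedRing R] {p : R}
    (hp : IsIdempotentElem p) (h : p ≠ 0) : 1 ≤ ‖p‖ := by
  have hpos : 0 < ‖p‖ := norm_pos_iff.mpr h
  have : ‖p‖ ≤ ‖p‖ * ‖p‖ := by simpa only [hp.eq] using norm_mul_le p p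
  exact le_of_mul_le_mul_right (by simpa only [one_mul] using this) hpos

section StarProjection

variable {𝕜 E : Type*} [RCLike 𝕜] [NormedAddCommGroup E] [InnerProductSpace 𝕜 E] [CompleteSpace E]
  {P : E →L[𝕜] E}

theorem IsStarProjection.norm_eq_one (hP : IsStarProjection P) (h : P ≠ 0) : ‖P‖ = 1 :=
  le_antisymm (hP.norm_le P) (hP.isIdempotentElem.one_le_norm h)

theorem IsStarProjection.inner_apply_eq_norm_apply_sq (hP : IsStarProjection P) (x : E) :
    inner 𝕜 x (P x) = (‖P x‖ : 𝕜) ^ 2 := by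
  have hPP : P (P x) = P x := congr($(hP.isIdempotentElem.eq) x)
  calc inner 𝕜 x (P x) = inner 𝕜 x (P (P x)) := by rw [hPP]
    _ = inner 𝕜 (P x) (P x) := (hP.isSelfAdjoint.isSymmetric x (P x)).symm
    _ = (‖P x‖ : 𝕜) ^ 2 := inner_self_eq_norm_sq_to_K (P x)

end StarProjection

theorem ContinuousLinearMap.smul_sub_one_apply_inv_smul_sub
    {𝕜 E : Type*} [NontriviallyNormedField 𝕜] [NormedAddCommGroup E] [NormedSpace 𝕜 E]
    (R : E →L[𝕜] E) {a : 𝕜} (ha : a ≠ 0) (b : 𝕜) (u v : E) :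
    ((a * b⁻¹) • (R - 1)) (a⁻¹ • u) - b⁻¹ • (v - u) = b⁻¹ • (R u - v) := by
  rw [mul_comm, mul_smul, smul_apply, smul_apply, ← map_smul, smul_inv_smul₀ ha, sub_apply,
    one_apply_eq_self, ← smul_sub]
  congr 1
  abel

section Locality

variable {N d : ℕ}

theorem SupportedOn.smul {X : Finset (Fin N)} {A : SpinOp N d} (h : SupportedOn X A) (c : ℂ) :
    SupportedOn X (c • A) := by
  have hentry : ∀ f g, matEntry (c • A) f g = c * matEntry A f g := fun f g => by
    simp [matEntry]
  refine ⟨fun f g hfg => ?_, fun f g f' g' h1 h2 h3 h4 => ?_⟩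
  · rw [hentry, h.1 f g hfg, mul_zero]
  · rw [hentry, hentry, h.2 f g f' g' h1 h2 h3 h4]

theorem matEntry_one (f g : Fin N → Fin d) :
    matEntry (1 : SpinOp N d) f g = if f = g then 1 else 0 := by
  rw [matEntry, one_apply_eq_self, basisVec, basisVec,
    EuclideanSpace.inner_single_left]
  simp

theorem supportedOn_empty_one : SupportedOn (∅ : Finset (Fin N)) (1 : SpinOp N d) := by
  have hext : ∀ f g : Fin N → Fin d, (∀ i, i ∉ (∅ : Finset (Fin N)) → f i = g i) → f = g :=
    fun f g h => funext fun i => h i (Finset.notMem_empty i)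
  refine ⟨?_, fun f g f' g' _ _ h h' => ?_⟩
  · rintro f g ⟨i, -, hi⟩
    rw [matEntry_one, if_neg fun h => hi (congrFun h i)]
  · rw [matEntry_one, matEntry_one, if_pos (hext f g h), if_pos (hext f' g' h')]

theorem isLocalOp_one (q : ℕ) : IsLocalOp q (1 : SpinOp N d) :=
  ⟨1, fun _ => ∅, fun _ => 1, fun _ => ⟨by simp, supportedOn_empty_one⟩, by simp⟩

theorem IsLocalOp.smul {q : ℕ} {A : SpinOp N d} (h : IsLocalOp q A) (c : ℂ) :
    IsLocalOp q (c • A) := by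
  obtain ⟨n, X, o, ho, rfl⟩ := h
  exact ⟨n, X, fun t => c • o t, fun t => ⟨(ho t).1, (ho t).2.smul c⟩, Finset.smul_sum⟩

theorem IsLocalOp.add {q : ℕ} {A B : SpinOp N d} (hA : IsLocalOp q A) (hB : IsLocalOp q B) :
    IsLocalOp q (A + B) := by
  obtain ⟨n, X, o, ho, rfl⟩ := hA
  obtain ⟨m, Y, p, hp, rfl⟩ := hB
  refine ⟨n + m, Fin.addCases X Y, Fin.addCases o p, fun t => ?_, by simp [Fin.sum_univ_add]⟩
  cases t using Fin.addCases <;> simp [ho, hp]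

theorem IsLocalOp.sub {q : ℕ} {A B : SpinOp N d} (hA : IsLocalOp q A) (hB : IsLocalOp q B) :
    IsLocalOp q (A - B) := by
  rw [sub_eq_add_neg, ← neg_one_smul ℂ B]
  exact hA.add (hB.smul (-1))

end Locality

theorem lr_macroscopic_decomposition_general
    {N d : ℕ} (f : ℝ → ℝ)
    (ψ : SpinSpace N d) (hLR : SatisfiesLR f ψ)
    (L : Finset (Fin N)) (P : SpinOp N d) (hPL : SupportedOn L P)
    (hproj : P.comp P = P) (hsa : IsSelfAdjoint P)
    (hα : 0 < ‖P ψ‖)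
    (q : ℕ) (hq : 0 < q) :
    ∃ O : SpinOp N d, IsLocalOp q O ∧
      ‖O ((‖P ψ‖ : ℂ)⁻¹ • P ψ) - (‖ψ - P ψ‖ : ℂ)⁻¹ • (ψ - P ψ)‖ ≤
        f ((q : ℝ) / Real.sqrt L.card) / (‖P ψ‖ ^ 2 * ‖ψ - P ψ‖) := by
  have hP : IsStarProjection P := ⟨hproj, hsa⟩
  have hαC : (‖P ψ‖ : ℂ) ≠ 0 := Complex.ofReal_ne_zero.mpr hα.ne'
  have hexp : inner ℂ ψ (P ψ) = (‖P ψ‖ : ℂ) ^ 2 := hP.inner_apply_eq_norm_apply_sq ψ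
  have hnorm : ‖P‖ = 1 := hP.norm_eq_one fun h => hα.ne' (by simp [h])
  obtain ⟨R, hRloc, hR⟩ := hLR L P hPL (hexp ▸ pow_ne_zero 2 hαC) q hq
  rw [hexp, hnorm, norm_pow, Complex.norm_real, Real.norm_of_nonneg (norm_nonneg _)] at hR
  refine ⟨((‖P ψ‖ : ℂ) * (‖ψ - P ψ‖ : ℂ)⁻¹) • (R - 1), (hRloc.sub (isLocalOp_one q)).smul _, ?_⟩
  rw [R.smul_sub_one_apply_inv_smul_sub hαC, norm_smul, norm_inv, Complex.norm_real,
    Real.norm_of_nonneg (norm_nonneg _)]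
  calc ‖ψ - P ψ‖⁻¹ * ‖R (P ψ) - ψ‖
      ≤ ‖ψ - P ψ‖⁻¹ * (1 / ‖P ψ‖ ^ 2 * f ((q : ℝ) / Real.sqrt L.card)) := by gcongr
    _ = _ := by field_simp

theorem lr_macroscopic_decomposition
    {N d : ℕ} (f : ℝ → ℝ) (hf : ∀ x, 0 ≤ f x)
    (ψ : SpinSpace N d) (hψ : ‖ψ‖ = 1) (hLR : SatisfiesLR f ψ)
    (L : Finset (Fin N)) (P : SpinOp N d) (hPL : SupportedOn L P)
    (hproj : P.comp P = P) (hsa : IsSelfAdjoint P)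
    (hα : 0 < ‖P ψ‖) (hβ : 0 < ‖ψ - P ψ‖)
    (q : ℕ) (hq : 0 < q) :
    ∃ O : SpinOp N d, IsLocalOp q O ∧
      ‖O ((‖P ψ‖ : ℂ)⁻¹ • P ψ) - (‖ψ - P ψ‖ : ℂ)⁻¹ • (ψ - P ψ)‖ ≤
        f ((q : ℝ) / Real.sqrt L.card) / (‖P ψ‖ ^ 2 * ‖ψ - P ψ‖) :=
  lr_macroscopic_decomposition_general f ψ hLR L P hPL hproj hsa hα q hq
end
end

section
/- For every natural number n and every real x with |x| ≥ 1, the n-th Chebyshev polynomial of the first kind satisfies |T_n(x)| ≥ (1/2)·exp(2n·√((|x|−1)/(|x|+1))). -/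
/-!
Write `|x| = cosh t` with `t ≥ 0`. By parity and `T_n (cosh t) = cosh (n t)` we get
`|T_n x| = cosh (n t) ≥ exp (n t) / 2`, while the half-angle formula gives
`√((|x| - 1) / (|x| + 1)) = tanh (t / 2) ≤ t / 2`. The inequality `tanh s ≤ s` is
`u ≤ artanh u`, which is the first term of the series `artanh u = ∑ u ^ (2k+1) / (2k+1)`.
-/

open Polynomial

namespace Real

theorem self_le_artanh {u : ℝ} (hu₀ : 0 ≤ u) (hu₁ : u < 1) : u ≤ artanh u := by
  have hsum := hasSum_log_sub_log_of_abs_lt_one (abs_lt.2 ⟨by linarith, hu₁⟩)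
  have hfirst : 2 * u ≤ log (1 + u) - log (1 - u) := by
    simpa using le_hasSum hsum 0 fun k _ ↦ by positivity
  rw [artanh_eq_half_log ⟨by linarith, hu₁.le⟩, log_div (by linarith) (by linarith)]
  linarith

theorem tanh_le_self {s : ℝ} (hs : 0 ≤ s) : tanh s ≤ s := by
  rcases le_total (tanh s) 0 with h | h
  · linarith
  · simpa [artanh_tanh] using self_le_artanh h (tanh_lt_one s)

theorem tanh_half_eq_sqrt {t : ℝ} (ht : 0 ≤ t) :
    tanh (t / 2) = √((cosh t - 1) / (cosh t + 1)) := by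
  have hcosh : cosh t = 2 * cosh (t / 2) ^ 2 - 1 := calc
    cosh t = cosh (2 * (t / 2)) := by rw [mul_div_cancel₀ t two_ne_zero]
    _ = 2 * cosh (t / 2) ^ 2 - 1 := by rw [cosh_two_mul, sinh_sq]; ring
  have hnonneg : 0 ≤ tanh (t / 2) :=
    tanh_eq_sinh_div_cosh _ ▸ div_nonneg (sinh_nonneg_iff.2 (by linarith)) (cosh_pos _).le
  rw [← sqrt_sq hnonneg, tanh_eq_sinh_div_cosh, hcosh, div_pow, sinh_sq]
  congr 1
  field_simp
  ring

theorem exp_div_two_le_cosh (x : ℝ) : exp x / 2 ≤ cosh x := by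
  rw [cosh_eq]
  linarith [exp_pos (-x)]

end Real

theorem Polynomial.Chebyshev.abs_eval_T_abs {R : Type*} [CommRing R] [LinearOrder R]
    [IsStrictOrderedRing R] (n : ℤ) (x : R) : |(T R n).eval (|x|)| = |(T R n).eval x| := by
  rcases abs_choice x with h | h <;> simp [h, abs_mul]

theorem chebyshev_lower_bound (n : ℕ) (x : ℝ) (hx : 1 ≤ |x|) :
    (1 / 2) * Real.exp (2 * n * Real.sqrt ((|x| - 1) / (|x| + 1))) ≤
      |(Polynomial.Chebyshev.T ℝ n).eval x| := by
  set t := Real.arcosh |x|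
  have ht : 0 ≤ t := Real.arcosh_nonneg hx
  have hcosh : Real.cosh t = |x| := Real.cosh_arcosh hx
  have heval : |(Chebyshev.T ℝ n).eval x| = Real.cosh (n * t) := by
    rw [← Chebyshev.abs_eval_T_abs, ← hcosh, Chebyshev.T_real_cosh, abs_of_pos (Real.cosh_pos _)]
    norm_cast
  have htanh : 2 * n * Real.tanh (t / 2) ≤ n * t := by
    nlinarith [Real.tanh_le_self (by positivity : 0 ≤ t / 2), (n.cast_nonneg : (0 : ℝ) ≤ n)]
  rw [heval, ← hcosh, ← Real.tanh_half_eq_sqrt ht]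
  linarith [Real.exp_le_exp.2 htanh, Real.exp_div_two_le_cosh (n * t)]
end

section
/- Let δ > 0, E_c > 0, let n ≥ 1 be an integer, and set ξ = √(1 + 2E_c/δ). Then for every real x with δ ≤ x ≤ 2E_c + δ, |T_n((x − δ)/E_c − 1)| ≤ 2 e^{−2n/ξ} · T_n(1 + δ/E_c). (That is, the Chebyshev polynomial rescaled to the interval [δ, 2E_c + δ] and normalized to value 1 at x = 0 is bounded in absolute value by 2e^{−2n/ξ} on that interval.) -/
/-!
The normalisation point is `1 + δ / Ec = cosh t` with `t = 2 artanh ξ⁻¹`, so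
`T_n(1 + δ / Ec) = cosh (n t) ≥ exp (n t) / 2 ≥ exp (2 n / ξ) / 2`, the last step because
`artanh u ≥ u` for `0 ≤ u < 1`. On the other hand `[δ, 2 Ec + δ]` is mapped onto `[-1, 1]`,
where `|T_n| ≤ 1`.
-/

open Polynomial

namespace Real

theorem self_le_artanh_s9 {v : ℝ} (h0 : 0 ≤ v) (h1 : v < 1) : v ≤ artanh v := by
  have hseries := hasSum_log_sub_log_of_abs_lt_one (x := v) (by rwa [abs_of_nonneg h0])
  have hfirst : 2 * v ≤ log (1 + v) - log (1 - v) := by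
    simpa using le_hasSum hseries 0 (fun k _ => by positivity)
  rw [artanh_eq_half_log ⟨by linarith, h1.le⟩, log_div (by linarith) (by linarith)]
  linarith

theorem cosh_two_mul_artanh {v : ℝ} (hv : v ∈ Set.Ioo (-1) 1) :
    cosh (2 * artanh v) = (1 + v ^ 2) / (1 - v ^ 2) := by
  have hpos : 0 < 1 - v ^ 2 := by nlinarith [hv.1, hv.2]
  rw [cosh_two_mul, sinh_sq, cosh_artanh hv, div_pow, sq_sqrt hpos.le]
  field_simp
  ring

theorem exp_le_two_mul_cosh (x : ℝ) : exp x ≤ 2 * cosh x := by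
  rw [cosh_eq]
  linarith [exp_pos (-x)]

end Real

namespace Polynomial.Chebyshev

open Real

theorem exp_mul_le_two_mul_eval_T_cosh (n : ℤ) (t : ℝ) :
    exp (n * t) ≤ 2 * (T ℝ n).eval (cosh t) := by
  rw [T_real_cosh]
  exact exp_le_two_mul_cosh _

theorem exp_two_mul_le_two_mul_eval_T {v : ℝ} (h0 : 0 ≤ v) (h1 : v < 1) (n : ℕ) :
    exp (2 * n * v) ≤ 2 * (T ℝ n).eval ((1 + v ^ 2) / (1 - v ^ 2)) := by
  rw [← cosh_two_mul_artanh ⟨by linarith, h1⟩]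
  calc exp (2 * n * v) ≤ exp ((n : ℤ) * (2 * artanh v)) := by
        refine exp_le_exp.mpr ?_
        push_cast
        nlinarith [self_le_artanh_s9 h0 h1, (Nat.cast_nonneg n : (0 : ℝ) ≤ n)]
    _ ≤ _ := exp_mul_le_two_mul_eval_T_cosh n _

end Polynomial.Chebyshev

theorem chebyshev_boxcar_bound_general (δ Ec : ℝ) (hδ : 0 < δ) (hEc : 0 < Ec)
    (n : ℕ) (x : ℝ) (h1 : δ ≤ x) (h2 : x ≤ 2 * Ec + δ) :
    |(Polynomial.Chebyshev.T ℝ n).eval ((x - δ) / Ec - 1)| ≤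
      2 * Real.exp (-(2 * n) / Real.sqrt (1 + 2 * Ec / δ)) *
        (Polynomial.Chebyshev.T ℝ n).eval (1 + δ / Ec) := by
  set ξ := Real.sqrt (1 + 2 * Ec / δ)
  have hξ : 1 < ξ :=
    (Real.lt_sqrt zero_le_one).mpr (by rw [one_pow, lt_add_iff_pos_right]; positivity)
  have hcenter : (1 + ξ⁻¹ ^ 2) / (1 - ξ⁻¹ ^ 2) = 1 + δ / Ec := by
    rw [inv_pow, Real.sq_sqrt (by positivity)]
    field_simp
    ring
  have hinterval : |(x - δ) / Ec - 1| ≤ 1 := by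
    rw [abs_sub_le_iff, div_sub' hEc.ne', sub_div' hEc.ne', div_le_iff₀ hEc, div_le_iff₀ hEc]
    constructor <;> linarith
  have hgrowth := Chebyshev.exp_two_mul_le_two_mul_eval_T (by positivity)
    (inv_lt_one_of_one_lt₀ hξ) n
  rw [hcenter] at hgrowth
  calc |(Chebyshev.T ℝ n).eval ((x - δ) / Ec - 1)| ≤ 1 :=
        Chebyshev.abs_eval_T_real_le_one n hinterval
    _ = Real.exp (-(2 * n) / ξ) * Real.exp (2 * n * ξ⁻¹) := by
        rw [← Real.exp_add, neg_div, div_eq_mul_inv, neg_add_cancel, Real.exp_zero]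
    _ ≤ Real.exp (-(2 * n) / ξ) * (2 * (Chebyshev.T ℝ n).eval (1 + δ / Ec)) := by gcongr
    _ = _ := by ring

theorem chebyshev_boxcar_bound (δ Ec : ℝ) (hδ : 0 < δ) (hEc : 0 < Ec)
    (n : ℕ) (hn : 1 ≤ n) (x : ℝ) (h1 : δ ≤ x) (h2 : x ≤ 2 * Ec + δ) :
    |(Polynomial.Chebyshev.T ℝ n).eval ((x - δ) / Ec - 1)| ≤
      2 * Real.exp (-(2 * n) / Real.sqrt (1 + 2 * Ec / δ)) *
        (Polynomial.Chebyshev.T ℝ n).eval (1 + δ / Ec) :=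
  chebyshev_boxcar_bound_general δ Ec hδ hEc n x h1 h2
end

section
/- Let g > 0, let k ≥ 1 and n ≥ 1 be integers, let ℓ > 0 and δ > 0 be reals, and set λ = 1/(4gk) and E_c = gℓ + 8gkn. Then for every real x ≥ 2E_c + δ, ((2x − 2δ)/E_c − 2)^n ≤ e^{λ(x − 2gℓ)/2}. -/
open Polynomial

theorem growth_cancellation (g : ℝ) (hg : 0 < g) (k n : ℕ) (hk : 1 ≤ k)
    (hn : 1 ≤ n) (ℓ δ : ℝ) (hℓ : 0 < ℓ) (hδ : 0 < δ) (x : ℝ)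
    (hx : 2 * (g * ℓ + 8 * g * k * n) + δ ≤ x) :
    ((2 * x - 2 * δ) / (g * ℓ + 8 * g * k * n) - 2) ^ n ≤
      Real.exp ((1 / (4 * g * k)) * (x - 2 * g * ℓ) / 2) := by
  have hk' : (1:ℝ) ≤ k := by exact_mod_cast hk
  have hn' : (1:ℝ) ≤ n := by exact_mod_cast hn
  have hE : (0:ℝ) < g * ℓ + 8 * g * k * n := by positivity
  have h8 : (0:ℝ) < 8 * g * k := by positivity
  set E : ℝ := g * ℓ + 8 * g * k * n with hEdef
  have hb2 : (2:ℝ) ≤ (2 * x - 2 * δ) / E - 2 := by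
    have h4 : (4:ℝ) ≤ (2 * x - 2 * δ) / E := by
      rw [le_div_iff₀ hE]; linarith
    linarith
  set b : ℝ := (2 * x - 2 * δ) / E - 2 with hbdef
  have hb0 : (0:ℝ) < b := by linarith
  have hbhalf : (0:ℝ) < b / 2 := half_pos hb0
  -- log b ≤ b/2
  have hlog2 : Real.log 2 ≤ 1 := by
    have := Real.log_le_sub_one_of_pos (by norm_num : (0:ℝ) < 2)
    linarith
  have hlogb : Real.log b ≤ b / 2 := by
    have hsplit : b = 2 * (b / 2) := by ring
    calc Real.log b = Real.log (2 * (b / 2)) := by rw [← hsplit]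
      _ = Real.log 2 + Real.log (b / 2) := Real.log_mul (by norm_num) hbhalf.ne'
      _ ≤ 1 + (b / 2 - 1) := by
          have := Real.log_le_sub_one_of_pos hbhalf
          linarith
      _ = b / 2 := by ring
  -- b/2 expressed as fraction
  have hbeq : b / 2 = (x - δ - 2 * E) / E + 1 := by
    rw [hbdef]
    field_simp
    ring
  have hnum : (0:ℝ) ≤ x - δ - 2 * E := by rw [hEdef]; linarith
  have hkn : 8 * g * k * n ≤ E := by
    rw [hEdef]; nlinarith [mul_pos hg hℓ]
  -- n * ((x - δ - 2E)/E) ≤ (x - δ - 2E)/(8gk)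
  have hstep1 : (n:ℝ) * ((x - δ - 2 * E) / E) ≤ (x - δ - 2 * E) / (8 * g * k) := by
    rw [mul_div_assoc', div_le_div_iff₀ hE h8]
    nlinarith [mul_nonneg hnum (by linarith : (0:ℝ) ≤ E - 8 * g * k * n)]
  -- n ≤ (δ + 16gkn)/(8gk)
  have hstep2 : (n:ℝ) ≤ (δ + 16 * g * k * n) / (8 * g * k) := by
    rw [le_div_iff₀ h8]; nlinarith
  have heq : (x - 2 * g * ℓ) / (8 * g * k)
      = (x - δ - 2 * E) / (8 * g * k) + (δ + 16 * g * k * n) / (8 * g * k) := by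
    rw [hEdef]; ring
  have hmain : (n:ℝ) * Real.log b ≤ 1 / (4 * g * k) * (x - 2 * g * ℓ) / 2 := by
    have hrhs : 1 / (4 * g * k) * (x - 2 * g * ℓ) / 2 = (x - 2 * g * ℓ) / (8 * g * k) := by
      rw [one_div, inv_mul_eq_div, div_div]
      ring_nf
    rw [hrhs, heq]
    have h1 : (n:ℝ) * Real.log b ≤ (n:ℝ) * (b / 2) :=
      mul_le_mul_of_nonneg_left hlogb (by linarith)
    have h2 : (n:ℝ) * (b / 2) = (n:ℝ) * ((x - δ - 2 * E) / E) + n := by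
      rw [hbeq]; ring
    linarith
  calc b ^ n = Real.exp (Real.log b) ^ n := by rw [Real.exp_log hb0]
    _ = Real.exp ((n:ℝ) * Real.log b) := (Real.exp_nat_mul _ n).symm
    _ ≤ Real.exp (1 / (4 * g * k) * (x - 2 * g * ℓ) / 2) := Real.exp_le_exp.mpr hmain
end
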